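/- The function b : [0,T] → ℝ solving the Riccati ODE -b'(t) = α₄ b(t) - (α₂/2) b(t)² - q/2 with b(T) = 0, where q = p/(1-p) < 0, α₂ = (1+q)β² + γ² > 0, α₄ = qβ - κ, exists on all of [0,T] and is bounded and nonnegative. -/

import Mathlib

open Set

/-!
Rewriting the Riccati equation as a linear system for the numerator and denominator of
`b = N / M` gives the closed form
`b t = -q (E t - 1) / ((δ - a) E t + (δ + a))` with `E t = exp (δ (T - t))` and
`δ = √(a² - c q)`. When `c > 0` and `q < 0` we have `δ > |a|`, so the denominator never
vanishes and the solution exists on all of `(-∞, T]`; since `E ≥ 1` there, `b` lies between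
`0` and `-q / (δ - a)`.
-/

open Real

namespace Riccati

variable (a c q T : ℝ)

noncomputable def rate : ℝ := √(a ^ 2 - c * q)

noncomputable def denom (t : ℝ) : ℝ :=
  (rate a c q - a) * exp (rate a c q * (T - t)) + (rate a c q + a)

noncomputable def solution (t : ℝ) : ℝ :=
  -q * (exp (rate a c q * (T - t)) - 1) / denom a c q T t

theorem solution_self : solution a c q T T = 0 := by
  simp [solution]

variable {a c q}

theorem abs_lt_rate (hc : 0 < c) (hq : q < 0) : |a| < rate a c q := by
  rw [← sqrt_sq_eq_abs]
  exact sqrt_lt_sqrt (sq_nonneg a) (by nlinarith)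

theorem denom_pos (hc : 0 < c) (hq : q < 0) (t : ℝ) : 0 < denom a c q T t := by
  have := abs_lt.mp (abs_lt_rate (a := a) hc hq)
  unfold denom
  nlinarith [exp_pos (rate a c q * (T - t))]

theorem hasDerivAt_solution (hdisc : 0 ≤ a ^ 2 - c * q) {t : ℝ} (ht : denom a c q T t ≠ 0) :
    HasDerivAt (solution a c q T)
      (-(a * solution a c q T t - c / 2 * solution a c q T t ^ 2 - q / 2)) t := by
  have hδ : rate a c q ^ 2 = a ^ 2 - c * q := sq_sqrt hdisc
  have hE := (((hasDerivAt_id' t).const_sub T).const_mul (rate a c q)).exp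
  have hN := (hE.sub_const 1).const_mul (-q)
  have hM := (hE.const_mul (rate a c q - a)).add_const (rate a c q + a)
  refine (hN.div hM ht).congr_deriv ?_
  unfold solution denom at *
  generalize exp (rate a c q * (T - t)) = E at ht ⊢
  generalize rate a c q = δ at hδ ht ⊢
  rw [mul_comm] at ht
  field_simp
  linear_combination (-q) * (E - 1) ^ 2 * hδ

theorem solution_nonneg (hc : 0 < c) (hq : q < 0) {t : ℝ} (ht : t ≤ T) :
    0 ≤ solution a c q T t := by
  have hE : 1 ≤ exp (rate a c q * (T - t)) :=
    one_le_exp (mul_nonneg (abs_nonneg a |>.trans (abs_lt_rate hc hq).le) (by linarith))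
  exact div_nonneg (mul_nonneg (by linarith) (by linarith)) (denom_pos T hc hq t).le

theorem solution_le (hc : 0 < c) (hq : q < 0) (t : ℝ) :
    solution a c q T t ≤ -q / (rate a c q - a) := by
  have hδ := abs_lt.mp (abs_lt_rate (a := a) hc hq)
  rw [solution, div_le_div_iff₀ (denom_pos T hc hq t) (by linarith), denom]
  nlinarith

end Riccati

theorem riccati_normal_solution_general (p q T : ℝ) (hp : p < 0)
    (hq : q = p / (1 - p))
    (α₂ α₄ : ℝ) (hα₂_pos : 0 < α₂) :
    ∃ b : ℝ → ℝ, b T = 0 ∧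
      (∀ t ∈ Icc (0 : ℝ) T,
        HasDerivAt b (-(α₄ * b t - α₂ / 2 * (b t) ^ 2 - q / 2)) t) ∧
      ∃ Cb : ℝ, ∀ t ∈ Icc (0 : ℝ) T, 0 ≤ b t ∧ b t ≤ Cb := by
  have hq_neg : q < 0 := hq ▸ div_neg_of_neg_of_pos hp (by linarith)
  refine ⟨Riccati.solution α₄ α₂ q T, Riccati.solution_self .., fun t _ => ?_,
    -q / (Riccati.rate α₄ α₂ q - α₄), fun t ht =>
      ⟨Riccati.solution_nonneg T hα₂_pos hq_neg ht.2, Riccati.solution_le T hα₂_pos hq_neg t⟩⟩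
  exact Riccati.hasDerivAt_solution T (by nlinarith [sq_nonneg α₄])
    (Riccati.denom_pos T hα₂_pos hq_neg t).ne'

/-- The Riccati ODE `-b'(t) = α₄ b(t) - (α₂/2) b(t)² - q/2`, `b(T) = 0`, with
`q = p/(1-p) < 0`, `α₂ = (1+q)β² + γ² > 0`, `α₄ = qβ - κ`, has a (normal
non-exploding) solution on all of `[0,T]` which is bounded and nonnegative. -/
theorem riccati_normal_solution (p q β γ κ T : ℝ) (hp : p < 0)
    (hq : q = p / (1 - p)) (hκ : 0 < κ) (hT : 0 < T)
    (α₂ α₄ : ℝ) (hα₂ : α₂ = (1 + q) * β ^ 2 + γ ^ 2) (hα₂_pos : 0 < α₂)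
    (hα₄ : α₄ = q * β - κ) :
    ∃ b : ℝ → ℝ, b T = 0 ∧
      (∀ t ∈ Icc (0 : ℝ) T,
        HasDerivAt b (-(α₄ * b t - α₂ / 2 * (b t) ^ 2 - q / 2)) t) ∧
      ∃ Cb : ℝ, ∀ t ∈ Icc (0 : ℝ) T, 0 ≤ b t ∧ b t ≤ Cb :=
  riccati_normal_solution_general p q T hp hq α₂ α₄ hα₂_pos
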